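/- Let A and C be *-algebras over k and ψ: A⊗C → C⊗A a k-linear map. The map *: C⊗A → C⊗A, (c⊗a)* := ψ(a*⊗c*), is an involution (it squares to the identity) if and only if ψ is bijective with inverse ψ^{-1} = (*_A⊗*_C)∘flip∘ψ∘(*_A⊗*_C)∘flip: C⊗A → A⊗C. In that case, if moreover ψ satisfies the distributive laws (C1) and (C2), then this involution is anti-multiplicative for m^ψ, i.e. ((c⊗a)·^ψ(c'⊗a'))* = (c'⊗a')*·^ψ(c⊗a)*, so it makes C⊗^ψA a *-algebra. -/
import Mathlib


open TensorProduct LinearMap Function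

noncomputable section
namespace Paper

variable (k : Type*) [Field k]
section Twist
variable (A : Type*) [Ring A] [Algebra k A] (C : Type*) [Ring C] [Algebra k C]

/-- The twisted multiplication `m^ψ := (m_C ⊗ m_A) ∘ (id_C ⊗ ψ ⊗ id_A)` as a linear map
`(C ⊗ A) ⊗ (C ⊗ A) → C ⊗ A`. -/
def tmulMap (ψ : A ⊗[k] C →ₗ[k] C ⊗[k] A) :
    (C ⊗[k] A) ⊗[k] (C ⊗[k] A) →ₗ[k] C ⊗[k] A :=
  TensorProduct.map (LinearMap.mul' k C) (LinearMap.mul' k A)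
    ∘ₗ (TensorProduct.assoc k (C ⊗[k] C) A A).toLinearMap
    ∘ₗ TensorProduct.map (TensorProduct.assoc k C C A).symm.toLinearMap LinearMap.id
    ∘ₗ TensorProduct.map (LinearMap.lTensor C ψ) LinearMap.id
    ∘ₗ TensorProduct.map (TensorProduct.assoc k C A C).toLinearMap LinearMap.id
    ∘ₗ (TensorProduct.assoc k (C ⊗[k] A) C A).symm.toLinearMap

/-- The twisted product of two elements of `C ⊗ A`. -/
def tmul (ψ : A ⊗[k] C →ₗ[k] C ⊗[k] A) (x y : C ⊗[k] A) : C ⊗[k] A :=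
  tmulMap k A C ψ (x ⊗ₜ y)

/-- `ψ` is a twisting map when the product `m^ψ` is associative. -/
def IsTwistingMap (ψ : A ⊗[k] C →ₗ[k] C ⊗[k] A) : Prop :=
  ∀ x y z : C ⊗[k] A,
    tmul k A C ψ (tmul k A C ψ x y) z = tmul k A C ψ x (tmul k A C ψ y z)

/-- `ψ (a ⊗ 1_C) = 1_C ⊗ a`. -/
def LeftNormal (ψ : A ⊗[k] C →ₗ[k] C ⊗[k] A) : Prop :=
  ∀ a : A, ψ (a ⊗ₜ (1 : C)) = (1 : C) ⊗ₜ a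

/-- `ψ (1_A ⊗ c) = c ⊗ 1_A`. -/
def RightNormal (ψ : A ⊗[k] C →ₗ[k] C ⊗[k] A) : Prop :=
  ∀ c : C, ψ ((1 : A) ⊗ₜ c) = c ⊗ₜ (1 : A)

/-- Distributive law (C1): `ψ ∘ (m_A ⊗ id_C) = (id_C ⊗ m_A) ∘ (ψ ⊗ id_A) ∘ (id_A ⊗ ψ)`. -/
def DistLawC1 (ψ : A ⊗[k] C →ₗ[k] C ⊗[k] A) : Prop :=
  ψ ∘ₗ rTensor C (LinearMap.mul' k A)
    = lTensor C (LinearMap.mul' k A)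
        ∘ₗ (TensorProduct.assoc k C A A).toLinearMap
        ∘ₗ rTensor A ψ
        ∘ₗ (TensorProduct.assoc k A C A).symm.toLinearMap
        ∘ₗ lTensor A ψ
        ∘ₗ (TensorProduct.assoc k A A C).toLinearMap

/-- Distributive law (C2): `ψ ∘ (id_A ⊗ m_C) = (m_C ⊗ id_A) ∘ (id_C ⊗ ψ) ∘ (ψ ⊗ id_C)`. -/
def DistLawC2 (ψ : A ⊗[k] C →ₗ[k] C ⊗[k] A) : Prop :=
  ψ ∘ₗ lTensor A (LinearMap.mul' k C)
    = rTensor A (LinearMap.mul' k C)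
        ∘ₗ (TensorProduct.assoc k C C A).symm.toLinearMap
        ∘ₗ lTensor C ψ
        ∘ₗ (TensorProduct.assoc k C A C).toLinearMap
        ∘ₗ rTensor C ψ
        ∘ₗ (TensorProduct.assoc k A C C).symm.toLinearMap

/-- The left-hand side of the associativity condition (Oeq):
`(id_C ⊗ m_A) ∘ (ψ ⊗ id_A) ∘ (id_A ⊗ m_C ⊗ id_A) ∘ (id_A ⊗ id_C ⊗ ψ)`. -/
def OeqLHS (ψ : A ⊗[k] C →ₗ[k] C ⊗[k] A) :
    (A ⊗[k] C) ⊗[k] (A ⊗[k] C) →ₗ[k] C ⊗[k] A :=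
  lTensor C (LinearMap.mul' k A)
    ∘ₗ (TensorProduct.assoc k C A A).toLinearMap
    ∘ₗ rTensor A ψ
    ∘ₗ TensorProduct.map (lTensor A (LinearMap.mul' k C)) LinearMap.id
    ∘ₗ TensorProduct.map (TensorProduct.assoc k A C C).toLinearMap LinearMap.id
    ∘ₗ (TensorProduct.assoc k (A ⊗[k] C) C A).symm.toLinearMap
    ∘ₗ lTensor (A ⊗[k] C) ψ

/-- The right-hand side of the associativity condition (Oeq):
`(m_C ⊗ id_A) ∘ (id_C ⊗ ψ) ∘ (id_C ⊗ m_A ⊗ id_C) ∘ (ψ ⊗ id_A ⊗ id_C)`. -/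
def OeqRHS (ψ : A ⊗[k] C →ₗ[k] C ⊗[k] A) :
    (A ⊗[k] C) ⊗[k] (A ⊗[k] C) →ₗ[k] C ⊗[k] A :=
  rTensor A (LinearMap.mul' k C)
    ∘ₗ (TensorProduct.assoc k C C A).symm.toLinearMap
    ∘ₗ lTensor C ψ
    ∘ₗ (TensorProduct.assoc k C A C).toLinearMap
    ∘ₗ TensorProduct.map (lTensor C (LinearMap.mul' k A)) LinearMap.id
    ∘ₗ TensorProduct.map (TensorProduct.assoc k C A A).toLinearMap LinearMap.id
    ∘ₗ (TensorProduct.assoc k (C ⊗[k] A) A C).symm.toLinearMap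
    ∘ₗ rTensor (A ⊗[k] C) ψ

/-- The set of relations `c ⊗ (b·a) - (c·F(b)) ⊗ a` defining the push-forward `C ⊗_B A`. -/
def relSet (B : Subalgebra k A) (F : B →ₐ[k] C) : Set (C ⊗[k] A) :=
  {x | ∃ (c : C) (b : B) (a : A), x = c ⊗ₜ ((b : A) * a) - (c * F b) ⊗ₜ a}

/-- The subspace spanned by the relations defining the push-forward `C ⊗_B A`. -/
def relSpan (B : Subalgebra k A) (F : B →ₐ[k] C) : Submodule k (C ⊗[k] A) :=
  Submodule.span k (relSet k A C B F)

end Twist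
section Star
variable [StarRing k] [TrivialStar k]
variable (X : Type*) [Ring X] [Algebra k X] [StarRing X] [StarModule k X]
variable (Y : Type*) [Ring Y] [Algebra k Y] [StarRing Y] [StarModule k Y]

/-- The map `(∗_Y ⊗ ∗_X) ∘ flip : X ⊗ Y → Y ⊗ X`, `x ⊗ y ↦ y* ⊗ x*`. -/
def starFlip : X ⊗[k] Y →ₗ[k] Y ⊗[k] X :=
  TensorProduct.lift (LinearMap.mk₂ k (fun x y => (star y : Y) ⊗ₜ[k] (star x : X))
    (fun x x' y => by simp [star_add, TensorProduct.tmul_add])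
    (fun r x y => by simp [star_smul, star_trivial, TensorProduct.tmul_smul])
    (fun x y y' => by simp [star_add, TensorProduct.add_tmul])
    (fun r x y => by simp [star_smul, star_trivial, TensorProduct.smul_tmul']))

@[simp] lemma starFlip_tmul (x : X) (y : Y) :
    starFlip k X Y (x ⊗ₜ y) = (star y : Y) ⊗ₜ (star x : X) := rfl

end Star
section Flat
variable (R : Type*) [Ring R] (M : Type*) [AddCommGroup M] [Module R M]

/-- Flatness of a left module over a (possibly noncommutative) ring, via the equational
criterion: every linear relation among elements of `M` is a consequence of linear relations
holding in `R`. -/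
def IsFlatLeft : Prop :=
  ∀ (n : ℕ) (r : Fin n → R) (x : Fin n → M), (∑ i, r i • x i) = 0 →
    ∃ (m : ℕ) (a : Fin n → Fin m → R) (y : Fin m → M),
      (∀ i, x i = ∑ j, a i j • y j) ∧ ∀ j, (∑ i, r i * a i j) = 0

/-- Faithful flatness of a left module over a (possibly noncommutative) ring: flatness
together with `I·M ≠ M` for every maximal right ideal `I` of `R`. -/
def IsFaithfullyFlatLeft : Prop :=
  IsFlatLeft R M ∧ ∀ I : Submodule Rᵐᵒᵖ R, IsCoatom I →
    AddSubgroup.closure {z : M | ∃ i ∈ I, ∃ v : M, z = i • v} ≠ ⊤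

end Flat
section Hopf
variable (A : Type*) [Ring A] [Algebra k A] (C : Type*) [Ring C] [Algebra k C]
variable (H : Type*) [Ring H] [HopfAlgebra k H]

/-- `δ : A → A ⊗ H` makes `A` a right `H`-comodule algebra: `δ` is an algebra map (built in)
which is coassociative and counital. -/
def IsComodAlg (δ : A →ₐ[k] A ⊗[k] H) : Prop :=
  ((TensorProduct.assoc k A H H).toLinearMap ∘ₗ rTensor H δ.toLinearMap ∘ₗ δ.toLinearMap
      = lTensor A (Coalgebra.comul (R := k) (A := H)) ∘ₗ δ.toLinearMap)
    ∧ ((TensorProduct.rid k A).toLinearMap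
        ∘ₗ lTensor A (Coalgebra.counit (R := k) (A := H)) ∘ₗ δ.toLinearMap
      = LinearMap.id)

/-- The subalgebra `A^{co H}` of coinvariant elements of a comodule algebra. -/
def coinv (δ : A →ₐ[k] A ⊗[k] H) : Subalgebra k A where
  carrier := {a | δ a = a ⊗ₜ[k] (1 : H)}
  mul_mem' := by
    intro a b ha hb
    simp only [Set.mem_setOf_eq] at *
    rw [map_mul, ha, hb, Algebra.TensorProduct.tmul_mul_tmul, one_mul]
  one_mem' := by
    simp only [Set.mem_setOf_eq, map_one, Algebra.TensorProduct.one_def]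
  add_mem' := by
    intro a b ha hb
    simp only [Set.mem_setOf_eq] at *
    rw [map_add, ha, hb, TensorProduct.add_tmul]
  algebraMap_mem' := by
    intro r
    simp only [Set.mem_setOf_eq, AlgHom.commutes, Algebra.TensorProduct.algebraMap_apply]

/-- The canonical map `A ⊗ A → A ⊗ H`, `a ⊗ a' ↦ a a'₍₀₎ ⊗ a'₍₁₎` (before taking the
quotient `A ⊗_B A`). -/
def chi0 (δ : A →ₐ[k] A ⊗[k] H) : A ⊗[k] A →ₗ[k] A ⊗[k] H :=
  rTensor H (LinearMap.mul' k A)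
    ∘ₗ (TensorProduct.assoc k A A H).symm.toLinearMap
    ∘ₗ lTensor A δ.toLinearMap

/-- The coaction `id_C ⊗ δ` on `C ⊗ A` (with `C` a trivial comodule), as a map
`C ⊗ A → (C ⊗ A) ⊗ H`. -/
def coactT (δ : A →ₐ[k] A ⊗[k] H) : C ⊗[k] A →ₗ[k] (C ⊗[k] A) ⊗[k] H :=
  (TensorProduct.assoc k C A H).symm.toLinearMap ∘ₗ lTensor C δ.toLinearMap

/-- `ψ : A ⊗ C → C ⊗ A` is a morphism of right `H`-comodules:
`(id_C ⊗ δ) ∘ ψ = (ψ ⊗ id_H) ∘ (id_A ⊗ flip) ∘ (δ ⊗ id_C)`. -/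
def IsComodMor (δ : A →ₐ[k] A ⊗[k] H) (ψ : A ⊗[k] C →ₗ[k] C ⊗[k] A) : Prop :=
  lTensor C δ.toLinearMap ∘ₗ ψ
    = (TensorProduct.assoc k C A H).toLinearMap
        ∘ₗ rTensor H ψ
        ∘ₗ (TensorProduct.assoc k A C H).symm.toLinearMap
        ∘ₗ lTensor A (TensorProduct.comm k H C).toLinearMap
        ∘ₗ (TensorProduct.assoc k A H C).toLinearMap
        ∘ₗ rTensor C δ.toLinearMap

variable {k H} in
/-- Given a multiplication `m` on `P`, the induced multiplication on `P ⊗ H`. -/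
def tmulH {P : Type*} [AddCommGroup P] [Module k P] (m : P →ₗ[k] P →ₗ[k] P) :
    P ⊗[k] H →ₗ[k] P ⊗[k] H →ₗ[k] P ⊗[k] H :=
  TensorProduct.map₂ m (LinearMap.mul k H)

variable {k H} in
/-- The canonical Galois map `P ⊗ P → P ⊗ H`, `x ⊗ y ↦ (x ·_m y₍₀₎) ⊗ y₍₁₎`, for a
multiplication `m` and a coaction `db` on `P`. -/
def chiP {P : Type*} [AddCommGroup P] [Module k P]
    (m : P →ₗ[k] P →ₗ[k] P) (db : P →ₗ[k] P ⊗[k] H) : P ⊗[k] P →ₗ[k] P ⊗[k] H :=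
  rTensor H (TensorProduct.lift m)
    ∘ₗ (TensorProduct.assoc k P P H).symm.toLinearMap
    ∘ₗ lTensor P db

variable {k C} in
/-- The span of the relations `(x ·_m e c) ⊗ y - x ⊗ (e c ·_m y)` defining the balanced tensor
product `P ⊗_C P` over the image of `C` in `P`. -/
def balSpan {P : Type*} [AddCommGroup P] [Module k P]
    (m : P →ₗ[k] P →ₗ[k] P) (e : C → P) : Submodule k (P ⊗[k] P) :=
  Submodule.span k {z | ∃ (x y : P) (c : C), z = (m x (e c)) ⊗ₜ y - x ⊗ₜ (m (e c) y)}

variable {k H} in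
/-- Coassociativity of a coaction `db : P → P ⊗ H`. -/
def Coassoc {P : Type*} [AddCommGroup P] [Module k P] (db : P →ₗ[k] P ⊗[k] H) : Prop :=
  (TensorProduct.assoc k P H H).toLinearMap ∘ₗ rTensor H db ∘ₗ db
    = lTensor P (Coalgebra.comul (R := k) (A := H)) ∘ₗ db

variable {k H} in
/-- Counitality of a coaction `db : P → P ⊗ H`. -/
def Counital {P : Type*} [AddCommGroup P] [Module k P] (db : P →ₗ[k] P ⊗[k] H) : Prop :=
  (TensorProduct.rid k P).toLinearMap
      ∘ₗ lTensor P (Coalgebra.counit (R := k) (A := H)) ∘ₗ db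
    = LinearMap.id

variable {k H} in
/-- Convolution product of two linear maps `H → P`, with respect to a multiplication `m`
on `P`. -/
def convP {P : Type*} [AddCommGroup P] [Module k P]
    (m : P →ₗ[k] P →ₗ[k] P) (f g : H →ₗ[k] P) : H →ₗ[k] P :=
  TensorProduct.lift m ∘ₗ TensorProduct.map f g ∘ₗ Coalgebra.comul (R := k) (A := H)

variable {k H} in
/-- The unit for convolution: `h ↦ ε(h) • u`. -/
def convUnit {P : Type*} [AddCommGroup P] [Module k P] (u : P) : H →ₗ[k] P :=
  (Coalgebra.counit (R := k) (A := H)).smulRight u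

end Hopf

section HopfPush
variable (A : Type*) [Ring A] [Algebra k A] (C : Type*) [Ring C] [Algebra k C]
variable (H : Type*) [Ring H] [HopfAlgebra k H]
section PushForward
variable (δ : A →ₐ[k] A ⊗[k] H) (F : coinv k A H δ →ₐ[k] C)

/-- The subspace of `C ⊗ A` defining the push-forward `C ⊗_B A`, `B = A^{co H}`. -/
def pushSpan : Submodule k (C ⊗[k] A) := relSpan k A C (coinv k A H δ) F

/-- The quotient map `C ⊗ A → C ⊗_B A`. -/
def pushQ : C ⊗[k] A →ₗ[k] (C ⊗[k] A) ⧸ pushSpan k A C H δ F :=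
  (pushSpan k A C H δ F).mkQ

/-- `\barψ = π_B ∘ ψ` is a `B`-bimodule morphism. -/
def BarBimod (ψ : A ⊗[k] C →ₗ[k] C ⊗[k] A) : Prop :=
  (∀ (b : coinv k A H δ) (a : A) (c : C),
      pushQ k A C H δ F (ψ (((b : A) * a) ⊗ₜ c))
        = pushQ k A C H δ F (rTensor A (LinearMap.mulLeft k (F b)) (ψ (a ⊗ₜ c))))
  ∧ (∀ (b : coinv k A H δ) (a : A) (c : C),
      pushQ k A C H δ F (ψ (a ⊗ₜ (c * F b)))
        = pushQ k A C H δ F (lTensor C (LinearMap.mulRight k (b : A)) (ψ (a ⊗ₜ c))))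

/-- `\barψ (1_A ⊗ c) = c ⊗_B 1_A` and `\barψ (a ⊗ 1_C) = 1_C ⊗_B a`. -/
def BarNormal (ψ : A ⊗[k] C →ₗ[k] C ⊗[k] A) : Prop :=
  (∀ c : C, pushQ k A C H δ F (ψ ((1 : A) ⊗ₜ c)) = pushQ k A C H δ F (c ⊗ₜ (1 : A)))
  ∧ (∀ a : A, pushQ k A C H δ F (ψ (a ⊗ₜ (1 : C))) = pushQ k A C H δ F ((1 : C) ⊗ₜ a))

/-- `σ` is the canonical left `C`-action on the push-forward `C ⊗_B A`:
`σ c (c' ⊗_B a) = (c c') ⊗_B a`. -/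
def SigmaSpec (σ : C →ₗ[k] ((C ⊗[k] A) ⧸ pushSpan k A C H δ F)
    →ₗ[k] ((C ⊗[k] A) ⧸ pushSpan k A C H δ F)) : Prop :=
  ∀ (c : C) (x : C ⊗[k] A),
    σ c (pushQ k A C H δ F x) = pushQ k A C H δ F (rTensor A (LinearMap.mulLeft k c) x)

/-- The distributive law `\barψ (a ⊗ c c') = c^ψ · \barψ (a^ψ ⊗ c')`, where `·` denotes the
left `C`-action `σ` on the push-forward. -/
def BarDistrib (ψ : A ⊗[k] C →ₗ[k] C ⊗[k] A)
    (σ : C →ₗ[k] ((C ⊗[k] A) ⧸ pushSpan k A C H δ F)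
      →ₗ[k] ((C ⊗[k] A) ⧸ pushSpan k A C H δ F)) : Prop :=
  (pushQ k A C H δ F ∘ₗ ψ) ∘ₗ lTensor A (LinearMap.mul' k C)
    = TensorProduct.lift σ
        ∘ₗ lTensor C (pushQ k A C H δ F ∘ₗ ψ)
        ∘ₗ (TensorProduct.assoc k C A C).toLinearMap
        ∘ₗ rTensor C ψ
        ∘ₗ (TensorProduct.assoc k A C C).symm.toLinearMap

/-- The embedding `C → C ⊗_B A`, `c ↦ c ⊗_B 1_A`. -/
def eC : C → (C ⊗[k] A) ⧸ pushSpan k A C H δ F :=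
  fun c => pushQ k A C H δ F (c ⊗ₜ (1 : A))

end PushForward

section Galois
variable (δ : A →ₐ[k] A ⊗[k] H)

/-- The subspace of `A ⊗ A` defining the balanced tensor product `A ⊗_B A`, `B = A^{co H}`. -/
def galSpan : Submodule k (A ⊗[k] A) :=
  relSpan k A A (coinv k A H δ) (coinv k A H δ).val

/-- The quotient map `A ⊗ A → A ⊗_B A`. -/
def galQ : A ⊗[k] A →ₗ[k] (A ⊗[k] A) ⧸ galSpan k A H δ := (galSpan k A H δ).mkQ

/-- The translation map `τ = χ⁻¹(1_A ⊗ -) : H → A ⊗_B A` obtained from a bijective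
canonical map `χ`. -/
def transMap (χ : ((A ⊗[k] A) ⧸ galSpan k A H δ) ≃ₗ[k] A ⊗[k] H) :
    H →ₗ[k] (A ⊗[k] A) ⧸ galSpan k A H δ :=
  χ.symm.toLinearMap ∘ₗ TensorProduct.mk k A H 1

end Galois
end HopfPush
end Paper

section AuxStar
open Paper
set_option linter.unusedSectionVars false
set_option synthInstance.maxHeartbeats 1000000
set_option maxHeartbeats 1000000

variable (k : Type*) [Field k] [StarRing k] [TrivialStar k]
variable (A : Type*) [Ring A] [Algebra k A] [StarRing A] [StarModule k A]
variable (C : Type*) [Ring C] [Algebra k C] [StarRing C] [StarModule k C]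

lemma starFlip_starFlip (u : A ⊗[k] C) :
    starFlip k C A (starFlip k A C u) = u := by
  induction u using TensorProduct.induction_on with
  | zero => simp
  | tmul a c => simp
  | add x y hx hy => rw [map_add, map_add, hx, hy]

variable (ψ : A ⊗[k] C →ₗ[k] C ⊗[k] A)

lemma tmul_add_right (x y y' : C ⊗[k] A) :
    tmul k A C ψ x (y + y') = tmul k A C ψ x y + tmul k A C ψ x y' := by
  rw [Paper.tmul, Paper.tmul, Paper.tmul, TensorProduct.tmul_add, map_add]

lemma tmul_add_left (x x' y : C ⊗[k] A) :
    tmul k A C ψ (x + x') y = tmul k A C ψ x y + tmul k A C ψ x' y := by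
  rw [Paper.tmul, Paper.tmul, Paper.tmul, TensorProduct.add_tmul, map_add]

lemma tmul_zero_right (x : C ⊗[k] A) : tmul k A C ψ x 0 = 0 := by
  rw [Paper.tmul, TensorProduct.tmul_zero, map_zero]

lemma tmul_zero_left (y : C ⊗[k] A) : tmul k A C ψ 0 y = 0 := by
  rw [Paper.tmul, TensorProduct.zero_tmul, map_zero]

lemma tmul_tmul_eq (c c' : C) (a a' : A) :
    tmul k A C ψ (c ⊗ₜ a) (c' ⊗ₜ a')
      = TensorProduct.map (LinearMap.mulLeft k c) (LinearMap.mulRight k a')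
          (ψ (a ⊗ₜ c')) := by
  rw [Paper.tmul, Paper.tmulMap]
  simp only [coe_comp, comp_apply, LinearEquiv.coe_coe, assoc_symm_tmul,
    TensorProduct.map_tmul, id_coe, id_eq, assoc_tmul, lTensor_tmul]
  generalize ψ (a ⊗ₜ[k] c') = w
  induction w using TensorProduct.induction_on with
  | zero => simp
  | tmul p q =>
      simp [LinearMap.mul'_apply, LinearMap.mulLeft_apply, LinearMap.mulRight_apply]
  | add u v hu hv =>
      rw [TensorProduct.tmul_add, map_add, TensorProduct.add_tmul, map_add, map_add,
        map_add, hu, hv]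

/-- The map `w ↦ (id_C ⊗ m_A)((ψ ⊗ id_A)(assoc⁻¹ (b ⊗ w)))`. -/
def Fm (b : A) : C ⊗[k] A →ₗ[k] C ⊗[k] A :=
  lTensor C (LinearMap.mul' k A)
    ∘ₗ (TensorProduct.assoc k C A A).toLinearMap
    ∘ₗ rTensor A ψ
    ∘ₗ (TensorProduct.assoc k A C A).symm.toLinearMap
    ∘ₗ TensorProduct.mk k A (C ⊗[k] A) b

/-- The map `w ↦ (m_C ⊗ id_A)((id_C ⊗ ψ)(assoc (w ⊗ c')))`. -/
def Gm (c' : C) : C ⊗[k] A →ₗ[k] C ⊗[k] A :=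
  rTensor A (LinearMap.mul' k C)
    ∘ₗ (TensorProduct.assoc k C C A).symm.toLinearMap
    ∘ₗ lTensor C ψ
    ∘ₗ (TensorProduct.assoc k C A C).toLinearMap
    ∘ₗ (TensorProduct.mk k (C ⊗[k] A) C).flip c'

lemma Fm_tmul (b : A) (p : C) (q : A) :
    Fm k A C ψ b (p ⊗ₜ q)
      = TensorProduct.map LinearMap.id (LinearMap.mulRight k q) (ψ (b ⊗ₜ p)) := by
  rw [Fm]
  simp only [coe_comp, comp_apply, LinearEquiv.coe_coe, TensorProduct.mk_apply,
    assoc_symm_tmul, rTensor_tmul]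
  generalize ψ (b ⊗ₜ[k] p) = w
  induction w using TensorProduct.induction_on with
  | zero => simp
  | tmul p' q' =>
      simp [LinearMap.mul'_apply, LinearMap.mulRight_apply]
  | add u v hu hv =>
      rw [TensorProduct.add_tmul, map_add, map_add, hu, hv, map_add]

lemma Gm_tmul (c' : C) (p : C) (q : A) :
    Gm k A C ψ c' (p ⊗ₜ q)
      = TensorProduct.map (LinearMap.mulLeft k p) LinearMap.id (ψ (q ⊗ₜ c')) := by
  rw [Gm]
  simp only [coe_comp, comp_apply, LinearEquiv.coe_coe, LinearMap.flip_apply,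
    TensorProduct.mk_apply, assoc_tmul, lTensor_tmul]
  generalize ψ (q ⊗ₜ[k] c') = w
  induction w using TensorProduct.induction_on with
  | zero => simp
  | tmul p' q' =>
      simp [LinearMap.mul'_apply, LinearMap.mulLeft_apply]
  | add u v hu hv =>
      rw [TensorProduct.tmul_add, map_add, map_add, hu, hv, map_add]

lemma C1e (h : DistLawC1 k A C ψ) (b a : A) (c : C) :
    ψ ((b * a) ⊗ₜ c) = Fm k A C ψ b (ψ (a ⊗ₜ c)) := by
  have := LinearMap.congr_fun h ((b ⊗ₜ[k] a) ⊗ₜ[k] c)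
  simpa [Fm, LinearMap.mul'_apply] using this

lemma C2e (h : DistLawC2 k A C ψ) (a : A) (c c' : C) :
    ψ (a ⊗ₜ (c * c')) = Gm k A C ψ c' (ψ (a ⊗ₜ c)) := by
  have := LinearMap.congr_fun h (a ⊗ₜ[k] (c ⊗ₜ[k] c'))
  simpa [Gm, LinearMap.mul'_apply] using this

lemma L1 (h1 : DistLawC1 k A C ψ) (h2 : DistLawC2 k A C ψ) (b : A) (c : C)
    (w : A ⊗[k] C) :
    ψ (TensorProduct.map (LinearMap.mulLeft k b) (LinearMap.mulRight k c) w)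
      = Gm k A C ψ c (Fm k A C ψ b (ψ w)) := by
  induction w using TensorProduct.induction_on with
  | zero => simp
  | tmul u v =>
      rw [TensorProduct.map_tmul, LinearMap.mulLeft_apply, LinearMap.mulRight_apply,
        C2e k A C ψ h2 (b * u) v c, C1e k A C ψ h1 b u v]
  | add u v hu hv => rw [map_add, map_add, map_add, map_add, map_add, hu, hv]

lemma L3 (h1 : DistLawC1 k A C ψ) (p : C) (q : A) (y : C ⊗[k] A) :
    tmul k A C ψ (p ⊗ₜ q) y
      = TensorProduct.map (LinearMap.mulLeft k p) LinearMap.id (Fm k A C ψ q y) := by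
  induction y using TensorProduct.induction_on with
  | zero => rw [tmul_zero_right, map_zero, map_zero]
  | tmul p' q' =>
      rw [tmul_tmul_eq, Fm_tmul]
      conv_rhs => rw [← LinearMap.comp_apply, ← TensorProduct.map_comp,
        LinearMap.comp_id, LinearMap.id_comp]
  | add u v hu hv => rw [tmul_add_right, map_add, map_add, hu, hv]

lemma L2 (h1 : DistLawC1 k A C ψ) (a : A) (c : C) (x : C ⊗[k] A) :
    Gm k A C ψ c (TensorProduct.map LinearMap.id (LinearMap.mulRight k a) x)
      = tmul k A C ψ x (ψ (a ⊗ₜ c)) := by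
  induction x using TensorProduct.induction_on with
  | zero => rw [map_zero, map_zero, tmul_zero_left]
  | tmul p q =>
      rw [TensorProduct.map_tmul, LinearMap.id_coe, id_eq, LinearMap.mulRight_apply,
        Gm_tmul, C1e k A C ψ h1 q a c, L3 k A C ψ h1]
  | add u v hu hv => rw [map_add, map_add, tmul_add_left, hu, hv]

lemma keyK (hinv : ∀ x : C ⊗[k] A, ψ (starFlip k C A (ψ (starFlip k C A x))) = x)
    (h1 : DistLawC1 k A C ψ) (h2 : DistLawC2 k A C ψ)
    (b a : A) (d c : C) :
    tmul k A C ψ (ψ (b ⊗ₜ d)) (ψ (a ⊗ₜ c))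
      = ψ (TensorProduct.map (LinearMap.mulLeft k b) (LinearMap.mulRight k c)
            (starFlip k C A (ψ (starFlip k C A (d ⊗ₜ a))))) := by
  rw [L1 k A C ψ h1 h2, hinv (d ⊗ₜ a), Fm_tmul, L2 k A C ψ h1]

lemma L4 (c : C) (a' : A) (w : C ⊗[k] A) :
    starFlip k C A (TensorProduct.map (LinearMap.mulLeft k c) (LinearMap.mulRight k a') w)
      = TensorProduct.map (LinearMap.mulLeft k (star a')) (LinearMap.mulRight k (star c))
          (starFlip k C A w) := by
  induction w using TensorProduct.induction_on with
  | zero => simp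
  | tmul p q => simp [star_mul]
  | add u v hu hv => rw [map_add, map_add, map_add, map_add, hu, hv]

end AuxStar

open Paper in
/-- the map `(c ⊗ a)* := ψ(a* ⊗ c*)` is an involution iff `ψ` is bijective with
inverse `(∗_A ⊗ ∗_C) ∘ flip ∘ ψ ∘ (∗_A ⊗ ∗_C) ∘ flip`; in that case, if `ψ` satisfies (C1)
and (C2), the involution is anti-multiplicative for `m^ψ`. -/
theorem star_structure_twisted
    (k : Type*) [Field k] [StarRing k] [TrivialStar k]
    (A : Type*) [Ring A] [Algebra k A] [StarRing A] [StarModule k A]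
    (C : Type*) [Ring C] [Algebra k C] [StarRing C] [StarModule k C]
    (ψ : A ⊗[k] C →ₗ[k] C ⊗[k] A) :
    ((∀ x : C ⊗[k] A, (ψ ∘ₗ starFlip k C A) ((ψ ∘ₗ starFlip k C A) x) = x)
      ↔ (ψ ∘ₗ (starFlip k C A ∘ₗ ψ ∘ₗ starFlip k C A) = LinearMap.id
          ∧ (starFlip k C A ∘ₗ ψ ∘ₗ starFlip k C A) ∘ₗ ψ = LinearMap.id))
    ∧ ((∀ x : C ⊗[k] A, (ψ ∘ₗ starFlip k C A) ((ψ ∘ₗ starFlip k C A) x) = x) →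
        DistLawC1 k A C ψ → DistLawC2 k A C ψ →
        ∀ x y : C ⊗[k] A,
          (ψ ∘ₗ starFlip k C A) (tmul k A C ψ x y)
            = tmul k A C ψ ((ψ ∘ₗ starFlip k C A) y) ((ψ ∘ₗ starFlip k C A) x)) := by
  constructor
  · constructor
    · intro h
      refine ⟨?_, ?_⟩
      · apply LinearMap.ext; intro x
        simpa using h x
      · apply LinearMap.ext; intro y
        have hx := h (starFlip k A C y)
        simp only [coe_comp, comp_apply, id_coe, id_eq] at hx ⊢
        conv_lhs => rw [← starFlip_starFlip k A C y, hx]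
        exact starFlip_starFlip k A C y
    · rintro ⟨h1, _⟩ x
      simpa using LinearMap.congr_fun h1 x
  · intro h h1 h2 x y
    have hinv : ∀ z : C ⊗[k] A, ψ (starFlip k C A (ψ (starFlip k C A z))) = z := by
      intro z; simpa using h z
    induction x using TensorProduct.induction_on with
    | zero =>
        simp [tmul_zero_left, tmul_zero_right]
    | add u v hu hv =>
        rw [tmul_add_left, map_add, map_add, tmul_add_right, hu, hv]
    | tmul c a =>
        induction y using TensorProduct.induction_on with
        | zero =>
            simp [tmul_zero_left, tmul_zero_right]
        | add u v hu hv =>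
            rw [tmul_add_right, map_add, map_add, tmul_add_left, hu, hv]
        | tmul c' a' =>
            simp only [coe_comp, Function.comp_apply, starFlip_tmul]
            rw [tmul_tmul_eq,
              keyK k A C ψ hinv h1 h2 (star a') (star a) (star c') (star c)]
            congr 1
            rw [L4]
            congr 2
            simp
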